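/- arXiv:2510.08696 — 2 statements merged into one kernel-verified Lean document; each statement's English description precedes it below -/
import Mathlib

section
/- Let O be a finite set, D > 0 a constant, r : O → ℝ, and for each o ∈ O let π(·)(o) : ℝ^d → ℝ be differentiable at θ₀ ∈ ℝ^d with 0 < π(θ₀)(o) < D. Define w(z) = (1/z)·log(1/(1−z)) − 1 for z ∈ (0,1), and define J_MLE(θ) = Σ_{o∈O} π(θ)(o)·r(o) − Σ_{o∈O} π(θ)(o)·w(π(θ)(o)/D)·(1 − r(o)). Then J_MLE is differentiable at θ₀ with gradient ∇J_MLE(θ₀) = Σ_{o∈O} π(θ₀)(o)·( r(o) − (1 − r(o))·π(θ₀)(o)/(D − π(θ₀)(o)) )·∇π(θ₀)(o)/π(θ₀)(o). -/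
open Finset

/-- **Theorem 2 (confidence-weighted value function), single question, finite response
space.** With weight function `w(z) = (1/z)·log(1/(1-z)) - 1`, the value function
`J_MLE(θ) = ∑ₒ P(θ)(o)·r(o) - ∑ₒ P(θ)(o)·w(P(θ)(o)/D)·(1 - r(o))` is differentiable at
`θ₀` with gradient `∑ₒ P(θ₀)(o)·(r(o) - (1-r(o))·P(θ₀)(o)/(D - P(θ₀)(o))) • ∇log P(θ₀)(o)`. -/
theorem value_function_gradient (d : ℕ) (O : Type) [Fintype O]
    (P : EuclideanSpace ℝ (Fin d) → O → ℝ)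
    (g : O → EuclideanSpace ℝ (Fin d))
    (θ₀ : EuclideanSpace ℝ (Fin d))
    (D : ℝ) (r : O → ℝ)
    (hD : 0 < D)
    (hgrad : ∀ o, HasGradientAt (fun θ => P θ o) (g o) θ₀)
    (hpos : ∀ o, 0 < P θ₀ o)
    (hlt : ∀ o, P θ₀ o < D)
    (w : ℝ → ℝ)
    (hw : ∀ z ∈ Set.Ioo (0 : ℝ) 1, w z = (1 / z) * Real.log (1 / (1 - z)) - 1) :
    HasGradientAt
      (fun θ => ∑ o, P θ o * r o - ∑ o, P θ o * (w (P θ o / D) * (1 - r o)))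
      (∑ o, (P θ₀ o * (r o - (1 - r o) * P θ₀ o / (D - P θ₀ o))) • ((P θ₀ o)⁻¹ • g o))
      θ₀ := by
  rw [hasGradientAt_iff_hasFDerivAt]
  set f : O → (EuclideanSpace ℝ (Fin d)) →L[ℝ] ℝ :=
    fun o => InnerProductSpace.toDual ℝ _ (g o) with hf
  have hfd : ∀ o, HasFDerivAt (fun θ => P θ o) (f o) θ₀ := fun o =>
    (hgrad o).hasFDerivAt
  -- auxiliary function
  have key : ∀ o, HasFDerivAt
      (fun θ => P θ o * r o -
        (1 - r o) * (D * Real.log D - D * Real.log (D - P θ o) - P θ o))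
      ((r o - (1 - r o) * P θ₀ o / (D - P θ₀ o)) • f o) θ₀ := by
    intro o
    have hne : D - P θ₀ o ≠ 0 := by have := hlt o; linarith
    have h1 : HasFDerivAt (fun θ => D - P θ o) (-f o) θ₀ := by
      simpa using (hasFDerivAt_const D θ₀).fun_sub (hfd o)
    have h2 : HasFDerivAt (fun θ => Real.log (D - P θ o))
        ((D - P θ₀ o)⁻¹ • (-f o)) θ₀ := h1.log hne
    have h3 : HasFDerivAt
        (fun θ => P θ o * r o -
          (1 - r o) * (D * Real.log D - D * Real.log (D - P θ o) - P θ o))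
        ((r o) • f o - (1 - r o) • ((0 : _ →L[ℝ] ℝ) - D • ((D - P θ₀ o)⁻¹ • (-f o)) - f o))
        θ₀ := by
      exact ((hfd o).mul_const (r o)).sub
        ((((hasFDerivAt_const (D * Real.log D) θ₀).sub (h2.const_mul D)).sub
          (hfd o)).const_mul (1 - r o))
    convert h3 using 1
    ext v
    simp only [ContinuousLinearMap.coe_smul', ContinuousLinearMap.coe_sub',
      Pi.smul_apply, Pi.sub_apply, ContinuousLinearMap.zero_apply,
      ContinuousLinearMap.neg_apply, smul_eq_mul, ContinuousLinearMap.coe_neg',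
      Pi.neg_apply]
    field_simp
    ring
  have hsum : HasFDerivAt
      (fun θ => ∑ o, (P θ o * r o -
        (1 - r o) * (D * Real.log D - D * Real.log (D - P θ o) - P θ o)))
      (∑ o, (r o - (1 - r o) * P θ₀ o / (D - P θ₀ o)) • f o) θ₀ :=
    HasFDerivAt.fun_sum (fun o _ => key o)
  -- eventual equality
  have hev : (fun θ => ∑ o, P θ o * r o - ∑ o, P θ o * (w (P θ o / D) * (1 - r o)))
      =ᶠ[nhds θ₀] (fun θ => ∑ o, (P θ o * r o -
        (1 - r o) * (D * Real.log D - D * Real.log (D - P θ o) - P θ o))) := by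
    have hcont : ∀ o, ContinuousAt (fun θ => P θ o) θ₀ := fun o =>
      (hfd o).continuousAt
    have hnb : ∀ᶠ θ in nhds θ₀, ∀ o, 0 < P θ o ∧ P θ o < D := by
      rw [Filter.eventually_all]
      intro o
      have h1 : ∀ᶠ θ in nhds θ₀, P θ o ∈ Set.Ioo (0:ℝ) D :=
        (hcont o).eventually_mem (Ioo_mem_nhds (hpos o) (hlt o))
      exact h1.mono (fun θ h => ⟨h.1, h.2⟩)
    filter_upwards [hnb] with θ hθ
    rw [← Finset.sum_sub_distrib]
    apply Finset.sum_congr rfl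
    intro o _
    have h0 := (hθ o).1
    have h1 := (hθ o).2
    have hz : P θ o / D ∈ Set.Ioo (0:ℝ) 1 := by
      constructor
      · positivity
      · rw [div_lt_one hD]; exact h1
    rw [hw _ hz]
    have hne : D - P θ o ≠ 0 := by linarith
    have h2 : (1 : ℝ) - P θ o / D = (D - P θ o) / D := by field_simp
    have h3 : Real.log (1 / ((D - P θ o) / D)) = Real.log D - Real.log (D - P θ o) := by
      rw [one_div_div, Real.log_div hD.ne' hne]
    rw [h2, h3]
    field_simp
  have hres := hsum.congr_of_eventuallyEq hev
  refine hres.congr_fderiv ?_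
  simp only [map_sum, map_smul]
  apply Finset.sum_congr rfl
  intro o _
  rw [smul_smul]
  have hP := (hpos o).ne'
  congr 1
  field_simp
end

section
/- Let G ≥ 2, let r : {1,…,G} → {0,1} have at least one i with r(i) = 1 and at least one j with r(j) = 0, and let c : {1,…,G} → [0,1]. Define the calibrated rewards r̃(i) = r(i) − (1 − r(i))·c(i)/G and their mean μ̃ = (1/G)·Σ_{i=1}^G r̃(i). Then for every i: if r(i) = 1 then r̃(i) − μ̃ > 0, and if r(i) = 0 then r̃(i) − μ̃ < 0. -/
/-!
A correct generation has calibrated reward `1`, an incorrect one a reward in `[-1/G, 0]`.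
Since some generation is incorrect, the group mean lies strictly below `1`; since some
generation is correct, the mean is at least `1 - (G - 1)/G = 1/G > 0`. Hence the advantage
of a correct generation is `1 - μ̃ > 0` and that of an incorrect one is `-c/G - μ̃ < 0`.
-/

open Finset

section Mean

variable {ι : Type*} [Fintype ι]

theorem sum_div_card_lt_of_le_of_exists_lt (f : ι → ℝ) {a : ℝ} (hle : ∀ k, f k ≤ a)
    (hlt : ∃ j, f j < a) : (∑ k, f k) / Fintype.card ι < a := by
  obtain ⟨j, hj⟩ := hlt
  have hcard : (0 : ℝ) < Fintype.card ι := by exact_mod_cast Fintype.card_pos_iff.mpr ⟨j⟩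
  have hsum : ∑ k, f k < ∑ _k : ι, a := sum_lt_sum (fun k _ => hle k) ⟨j, mem_univ j, hj⟩
  rw [sum_const, card_univ, nsmul_eq_mul] at hsum
  rwa [div_lt_iff₀ hcard, mul_comm]

/-- Shifting every value by `1 / card ι` makes all terms nonnegative and raises the sum by
exactly `1`, so the sum is at least `f i + 1 / card ι - 1`. -/
theorem sum_div_card_pos_of_one_le (f : ι → ℝ) {i : ι} (hi : 1 ≤ f i)
    (hlb : ∀ k, -(1 / (Fintype.card ι : ℝ)) ≤ f k) : 0 < (∑ k, f k) / Fintype.card ι := by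
  have hcard : (0 : ℝ) < Fintype.card ι := by exact_mod_cast Fintype.card_pos_iff.mpr ⟨i⟩
  set g : ι → ℝ := fun k => f k + 1 / Fintype.card ι
  have hg_sum : ∑ k, g k = ∑ k, f k + 1 := by
    simp only [g, sum_add_distrib, sum_const, card_univ, nsmul_eq_mul]
    field_simp
  have hg_single : g i ≤ ∑ k, g k :=
    single_le_sum (fun k _ => neg_le_iff_add_nonneg.mp (hlb k)) (mem_univ i)
  have hgi : g i = f i + 1 / Fintype.card ι := rfl
  have : 0 < 1 / (Fintype.card ι : ℝ) := by positivity
  exact div_pos (by linarith) hcard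

end Mean

section CalibratedReward

/-- The paper's `r̃` for a generation with binary reward `r` and confidence penalty `c`
in a group of `G` generations. -/
noncomputable def calibratedReward (G : ℕ) (r c : ℝ) : ℝ := r - (1 - r) * c / G

variable {G : ℕ} {r c : ℝ}

@[simp]
theorem calibratedReward_one : calibratedReward G 1 c = 1 := by
  simp [calibratedReward]

@[simp]
theorem calibratedReward_zero : calibratedReward G 0 c = -(c / G) := by
  simp [calibratedReward]

theorem calibratedReward_zero_nonpos (hc : 0 ≤ c) : calibratedReward G 0 c ≤ 0 := by
  rw [calibratedReward_zero, neg_nonpos]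
  positivity

theorem calibratedReward_le_one (hr : r = 0 ∨ r = 1) (hc : 0 ≤ c) :
    calibratedReward G r c ≤ 1 := by
  rcases hr with rfl | rfl
  · linarith [calibratedReward_zero_nonpos (G := G) hc]
  · rw [calibratedReward_one]

theorem neg_one_div_le_calibratedReward (hr : r = 0 ∨ r = 1) (hc : c ≤ 1) :
    -(1 / (G : ℝ)) ≤ calibratedReward G r c := by
  rcases hr with rfl | rfl
  · rw [calibratedReward_zero, neg_le_neg_iff]
    gcongr
  · rw [calibratedReward_one]
    linarith [show (0 : ℝ) ≤ 1 / G by positivity]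

end CalibratedReward

theorem calibrated_sign_invariance_general (G : ℕ) (r c : Fin G → ℝ)
    (hr : ∀ i, r i = 0 ∨ r i = 1)
    (hc : ∀ i, c i ∈ Set.Icc (0 : ℝ) 1)
    (hpos : ∃ i, r i = 1) (hneg : ∃ j, r j = 0) :
    ∀ i, (r i = 1 →
        0 < (r i - (1 - r i) * c i / G) -
          (1 / (G : ℝ)) * ∑ k, (r k - (1 - r k) * c k / G)) ∧
      (r i = 0 →
        (r i - (1 - r i) * c i / G) -
          (1 / (G : ℝ)) * ∑ k, (r k - (1 - r k) * c k / G) < 0) := by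
  obtain ⟨i₀, hi₀⟩ := hpos
  obtain ⟨j₀, hj₀⟩ := hneg
  let f k := calibratedReward G (r k) (c k)
  have hf_nonpos {k} (hk : r k = 0) : f k ≤ 0 := by
    simpa only [f, hk] using calibratedReward_zero_nonpos (hc k).1
  have hmean_lt : 1 / (G : ℝ) * ∑ k, f k < 1 := by
    rw [one_div_mul_eq_div]
    simpa using sum_div_card_lt_of_le_of_exists_lt f
      (fun k => calibratedReward_le_one (hr k) (hc k).1)
      ⟨j₀, (hf_nonpos hj₀).trans_lt one_pos⟩
  have hmean_pos : 0 < 1 / (G : ℝ) * ∑ k, f k := by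
    rw [one_div_mul_eq_div]
    simpa using sum_div_card_pos_of_one_le f (i := i₀) (by simp [f, hi₀])
      (by simpa using fun k => neg_one_div_le_calibratedReward (G := G) (hr k) (hc k).2)
  intro i
  change (r i = 1 → 0 < f i - 1 / (G : ℝ) * ∑ k, f k) ∧
    (r i = 0 → f i - 1 / (G : ℝ) * ∑ k, f k < 0)
  refine ⟨fun hi => ?_, fun hi => ?_⟩
  · simp only [f, hi, calibratedReward_one]
    linarith
  · linarith [hf_nonpos hi]

/-- **Calibration preserves GRPO's sign invariance in mixed groups.** With binary
rewards `r` (not all equal), confidence penalties `c(i) ∈ [0,1]`, and calibrated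
rewards `r̃(i) = r(i) - (1 - r(i))·c(i)/G`, after subtracting the group mean
`μ̃ = (1/G)·∑ᵢ r̃(i)`, every correct generation has strictly positive advantage and
every incorrect generation has strictly negative advantage. -/
theorem calibrated_sign_invariance (G : ℕ) (hG : 2 ≤ G) (r c : Fin G → ℝ)
    (hr : ∀ i, r i = 0 ∨ r i = 1)
    (hc : ∀ i, c i ∈ Set.Icc (0 : ℝ) 1)
    (hpos : ∃ i, r i = 1) (hneg : ∃ j, r j = 0) :
    ∀ i, (r i = 1 →
        0 < (r i - (1 - r i) * c i / G) -
          (1 / (G : ℝ)) * ∑ k, (r k - (1 - r k) * c k / G)) ∧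
      (r i = 0 →
        (r i - (1 - r i) * c i / G) -
          (1 / (G : ℝ)) * ∑ k, (r k - (1 - r k) * c k / G) < 0) :=
  calibrated_sign_invariance_general G r c hr hc hpos hneg
end
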